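/- arXiv:2005.07214 — 5 statements merged into one kernel-verified Lean document; each statement's English description precedes it below -/
import Mathlib

section
/- Let p be a prime number and let M be a module over ℤ[1/p]. Let T = ℤ[1/p](+)M be the trivial extension of ℤ[1/p] by M, and let R be the subring of T consisting of those elements whose first component lies in the image of ℤ in ℤ[1/p]. Then R and T are adjacent: R ≠ T and every subring S of T with R ⊆ S ⊆ T satisfies S = R or S = T. -/
/-!
Since every subring of `ℤ[1/p](+)M` containing `R` contains `0 × M`, such a subring is the preimage
under the first projection of a subring of `ℤ[1/p]` containing `ℤ`. So it suffices that `ℤ ⊆ ℤ[1/p]`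
is a minimal extension. If `n / p ∈ B` with `p ∤ n`, a Bézout relation `a p + b n = 1` gives
`1 / p = a + b (n / p) ∈ B`, and `1 / p` generates `ℤ[1/p]`; any element outside `ℤ` reaches this case
after multiplication by a power of `p`.
-/

theorem IsLocalization.Away.subring_eq_top_of_invSelf_mem {R A : Type*} [CommRing R] [CommRing A]
    [Algebra R A] (x : R) [IsLocalization.Away x A] {B : Subring A}
    (hR : (algebraMap R A).range ≤ B) (hx : invSelf x ∈ B) : B = ⊤ := by
  refine eq_top_iff.2 fun z _ => ?_
  obtain ⟨n, a, hz⟩ := surj x z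
  have : z = algebraMap R A a * invSelf x ^ n := by
    rw [← hz, mul_assoc, ← mul_pow, mul_invSelf, one_pow, mul_one]
  rw [this]
  exact B.mul_mem (hR ⟨a, rfl⟩) (B.pow_mem hx n)

section PrimeDenominator

variable {R A : Type*} [CommRing R] [IsDomain R] [CommRing A] [Algebra R A]
  {p : R} [IsLocalization.Away p A]

theorem IsLocalization.Away.invSelf_notMem_range (hp : Prime p) :
    invSelf p ∉ (algebraMap R A).range := by
  rintro ⟨n, hn⟩
  have hinj : Function.Injective (algebraMap R A) :=
    IsLocalization.injective A (powers_le_nonZeroDivisors_of_noZeroDivisors hp.ne_zero)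
  have : p * n = 1 := hinj <| by rw [map_mul, map_one, hn, mul_invSelf]
  exact hp.not_isUnit (.of_mul_eq_one _ this)

variable [IsBezout R]

theorem IsLocalization.Away.invSelf_mem_of_mul_mem_range (hp : Prime p) {B : Subring A}
    (hR : (algebraMap R A).range ≤ B) {y : A} (hyB : y ∈ B) (hy : y ∉ (algebraMap R A).range)
    (hyp : y * algebraMap R A p ∈ (algebraMap R A).range) : invSelf p ∈ B := by
  obtain ⟨n, hn⟩ := hyp
  have hpn : ¬p ∣ n := by
    rintro ⟨m, rfl⟩
    rw [map_mul, mul_comm y] at hn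
    exact hy ⟨m, (algebraMap_isUnit p).mul_left_cancel hn⟩
  obtain ⟨a, b, hab⟩ := hp.coprime_iff_not_dvd.2 hpn
  have : invSelf p = algebraMap R A a + algebraMap R A b * y := by
    refine left_inv_eq_right_inv (by rw [mul_comm, mul_invSelf]) ?_
    rw [← map_one (algebraMap R A), ← hab, map_add, map_mul, map_mul, hn]
    ring
  rw [this]
  exact B.add_mem (hR ⟨a, rfl⟩) (B.mul_mem (hR ⟨b, rfl⟩) hyB)

theorem IsLocalization.Away.invSelf_mem_of_notMem_range (hp : Prime p) {B : Subring A}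
    (hR : (algebraMap R A).range ≤ B) {x : A} (hxB : x ∈ B) (hx : x ∉ (algebraMap R A).range) :
    invSelf p ∈ B := by
  obtain ⟨k, n, hn⟩ := surj p x
  induction k generalizing n with
  | zero => exact absurd ⟨n, by simpa using hn.symm⟩ hx
  | succ k ih =>
    by_cases hk : x * algebraMap R A p ^ k ∈ (algebraMap R A).range
    · obtain ⟨m, hm⟩ := hk
      exact ih m hm.symm
    · refine invSelf_mem_of_mul_mem_range hp hR (B.mul_mem hxB (B.pow_mem (hR ⟨p, rfl⟩) k)) hk
        ⟨n, ?_⟩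
      rw [← hn, pow_succ, mul_assoc]

theorem IsLocalization.Away.eq_range_or_eq_top_of_range_le (hp : Prime p) {B : Subring A}
    (hR : (algebraMap R A).range ≤ B) : B = (algebraMap R A).range ∨ B = ⊤ := by
  by_cases hB : B ≤ (algebraMap R A).range
  · exact .inl (le_antisymm hB hR)
  · obtain ⟨x, hxB, hx⟩ := Set.not_subset.1 hB
    exact .inr (subring_eq_top_of_invSelf_mem p hR (invSelf_mem_of_notMem_range hp hR hxB hx))

end PrimeDenominator

namespace TrivSqZeroExt

variable {R M : Type*} [CommRing R] [AddCommGroup M] [Module R M] [Module Rᵐᵒᵖ M]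
  [IsCentralScalar R M]

theorem subring_eq_comap_fst_of_inr_mem {S : Subring (TrivSqZeroExt R M)}
    (hS : ∀ m : M, inr m ∈ S) :
    S = (S.comap (inlHom R M)).comap (fstHom R R M).toRingHom := by
  refine Subring.ext fun x => ⟨fun hx => ?_, fun hx => ?_⟩
  · have : inl x.fst = x - inr x.snd := by ext <;> simp
    exact show inl x.fst ∈ S from this ▸ S.sub_mem hx (hS _)
  · exact x.inl_fst_add_inr_snd_eq ▸ S.add_mem hx (hS _)

end TrivSqZeroExt

open IsLocalization.Away TrivSqZeroExt in
/-- Let T = ℤ[1/p](+)M be the trivial extension and R the subring of T of elements whose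
first component lies in the image of ℤ. Then R and T are adjacent rings. -/
theorem triv_ext_adjacent (p : ℕ) (hp : p.Prime) (M : Type*) [AddCommGroup M]
    [Module (Localization.Away (p : ℤ)) M]
    [Module (Localization.Away (p : ℤ))ᵐᵒᵖ M]
    [IsCentralScalar (Localization.Away (p : ℤ)) M]
    (R : Subring (TrivSqZeroExt (Localization.Away (p : ℤ)) M))
    (hR : R = Subring.comap
      (TrivSqZeroExt.fstHom (Localization.Away (p : ℤ)) (Localization.Away (p : ℤ)) M).toRingHom
      (algebraMap ℤ (Localization.Away (p : ℤ))).range) :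
    R ≠ ⊤ ∧ ∀ S : Subring (TrivSqZeroExt (Localization.Away (p : ℤ)) M),
      R ≤ S → S = R ∨ S = ⊤ := by
  have hp' : Prime (p : ℤ) := Nat.prime_iff_prime_int.mp hp
  subst hR
  refine ⟨fun h => invSelf_notMem_range hp' (h ▸ Subring.mem_top (inl (M := M) _)), ?_⟩
  intro S hRS
  have hinr : ∀ m : M, inr m ∈ S := fun m => hRS ⟨0, by simp⟩
  have hB : (algebraMap ℤ _).range ≤ S.comap (inlHom _ M) := fun a ha => hRS (by simpa using ha)
  rw [subring_eq_comap_fst_of_inr_mem hinr]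
  rcases eq_range_or_eq_top_of_range_le hp' hB with h | h
  · exact .inl (by rw [h])
  · exact .inr (by rw [h, Subring.comap_top])
end

section
/- Let R ⊆ T be Noetherian commutative rings such that there do not exist integrally dependent adjacent Noetherian rings between them, i.e., there are no rings A, B with R ⊆ A ⊊ B ⊆ T such that A and B are Noetherian, B is integral over A, and no ring lies strictly between A and B. Then R is integrally closed in T (every element of T integral over R lies in R), and consequently the nilradical of T is contained in R and equals the nilradical of R. -/
/-!
If `x ∈ T` is integral over `R` but `x ∉ R`, then `R[x]` is a finite, hence Noetherian,
`R`-module, so the `R`-subalgebras of `R[x]` satisfy the ascending chain condition and `R[x]`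
has a maximal proper `R`-subalgebra `A`. Then `A ⊂ R[x]` are adjacent, `R[x]` is integral over
`A`, and both are Noetherian rings, being finite modules over `R`. Nilpotent elements are
integral, so they lie in `R`.
-/

theorem exists_covBy_of_wellFoundedGT_Iic {α : Type*} [PartialOrder α] {b : α}
    [WellFoundedGT (Set.Iic b)] (hb : ¬ IsMin b) : ∃ a, a ⋖ b := by
  have hb' : ¬ IsMin (⟨b, le_rfl⟩ : Set.Iic b) := fun hmin ↦
    hb fun c hcb ↦ Subtype.mk_le_mk.1 (hmin (b := ⟨c, hcb⟩) hcb)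
  obtain ⟨a, ha⟩ := exists_covBy_of_wellFoundedGT hb'
  exact ⟨a, (Set.OrdConnected.apply_covBy_apply_iff (OrderEmbedding.subtype _)
    (by rw [OrderEmbedding.coe_subtype, Subtype.range_coe]; exact Set.ordConnected_Iic)).2 ha⟩

theorem IsNilpotent.isIntegral {R B : Type*} [CommRing R] [Ring B] [Algebra R B] {x : B}
    (hx : IsNilpotent x) : IsIntegral R x := by
  obtain ⟨n, hn⟩ := hx
  exact IsIntegral.of_pow n.succ_pos (by rw [_root_.pow_succ, hn, zero_mul]; exact isIntegral_zero)

namespace Subalgebra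

section

variable {R A : Type*} [CommSemiring R] [Semiring A] [Algebra R A]

theorem wellFoundedGT_Iic {B : Subalgebra R A} [IsNoetherian R B] : WellFoundedGT (Set.Iic B) :=
  have : WellFoundedGT (Set.Iic (toSubmodule B)) :=
    (Submodule.mapIic _).symm.strictMono.wellFoundedGT
  StrictMono.wellFoundedGT
    (f := fun S : Set.Iic B ↦ (⟨toSubmodule S.1, S.2⟩ : Set.Iic (toSubmodule B)))
    fun _ _ h ↦ toSubmodule.strictMono h

theorem exists_covBy_of_bot_lt {B : Subalgebra R A} [IsNoetherian R B] (hB : ⊥ < B) :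
    ∃ S, S ⋖ B :=
  have := wellFoundedGT_Iic (B := B)
  exists_covBy_of_wellFoundedGT_Iic hB.not_isMin

end

variable {R A : Type*} [CommRing R] [Ring A] [Algebra R A]

theorem toSubring_covBy_toSubring {S B : Subalgebra R A} (h : S ⋖ B) :
    S.toSubring ⋖ B.toSubring := by
  let f : Subalgebra R A ↪o Subring A := OrderEmbedding.ofMapLEIff toSubring fun _ _ ↦ Iff.rfl
  have hf : (Set.range f).OrdConnected := ⟨by
    rintro _ ⟨S, rfl⟩ _ _ U ⟨hSU, -⟩
    exact ⟨{ U with algebraMap_mem' := fun r ↦ hSU (S.algebraMap_mem r) }, rfl⟩⟩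
  exact (hf.apply_covBy_apply_iff f).2 h

theorem isNoetherianRing_of_le [IsNoetherianRing R] {S B : Subalgebra R A} [Module.Finite R B]
    (h : S ≤ B) : IsNoetherianRing S :=
  have : IsNoetherian R S := isNoetherian_of_le (s := toSubmodule S) (t := toSubmodule B) h
  isNoetherian_of_tower R this

end Subalgebra

theorem integrally_closed_of_no_integrally_dependent_adjacent_general
    (T : Type*) [CommRing T] (R : Subring T) [IsNoetherianRing R]
    (h : ¬ ∃ A B : Subring T, R ≤ A ∧ A < B ∧ IsNoetherianRing A ∧ IsNoetherianRing B ∧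
      (∀ x ∈ B, IsIntegral A x) ∧
      (∀ S : Subring T, A ≤ S → S ≤ B → S = A ∨ S = B)) :
    (∀ x : T, IsIntegral R x → x ∈ R) ∧
    (∀ x ∈ nilradical T, x ∈ R) ∧
    (∀ x : R, x ∈ nilradical R ↔ (x : T) ∈ nilradical T) := by
  have integrallyClosed : ∀ x : T, IsIntegral R x → x ∈ R := by
    intro x hx
    by_contra hxR
    set B := Algebra.adjoin R {x}
    have : Module.Finite R B := Algebra.finite_adjoin_simple_of_isIntegral hx
    have hB : ⊥ < B := SetLike.lt_iff_le_and_exists.2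
      ⟨bot_le, x, Algebra.self_mem_adjoin_singleton R x, fun hxbot ↦
        hxR (by obtain ⟨r, rfl⟩ := Algebra.mem_bot.1 hxbot; exact r.2)⟩
    obtain ⟨A, hAB⟩ := Subalgebra.exists_covBy_of_bot_lt hB
    obtain ⟨hlt, hadj⟩ := covBy_iff_lt_and_eq_or_eq.1 (Subalgebra.toSubring_covBy_toSubring hAB)
    refine h ⟨A.toSubring, B.toSubring, fun r hr ↦ A.algebraMap_mem ⟨r, hr⟩, hlt,
      Subalgebra.isNoetherianRing_of_le hAB.le, Subalgebra.isNoetherianRing_of_le le_rfl,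
      fun y hy ↦ ?_, hadj⟩
    have hyA : IsIntegral A y := (IsIntegral.of_mem_of_fg B hx.fg_adjoin_singleton y hy).tower_top
    exact hyA
  refine ⟨integrallyClosed,
    fun x hx ↦ integrallyClosed x (mem_nilradical.1 hx).isIntegral, fun x ↦ ?_⟩
  rw [mem_nilradical, mem_nilradical]
  exact (IsNilpotent.map_iff (f := R.subtype) Subtype.val_injective).symm

/-- If R ⊆ T are Noetherian commutative rings with no integrally dependent adjacent
Noetherian rings between them, then R is integrally closed in T, and the nilradical of T
is contained in R and equals the nilradical of R. -/
theorem integrally_closed_of_no_integrally_dependent_adjacent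
    (T : Type*) [CommRing T] [IsNoetherianRing T] (R : Subring T) [IsNoetherianRing R]
    (h : ¬ ∃ A B : Subring T, R ≤ A ∧ A < B ∧ IsNoetherianRing A ∧ IsNoetherianRing B ∧
      (∀ x ∈ B, IsIntegral A x) ∧
      (∀ S : Subring T, A ≤ S → S ≤ B → S = A ∨ S = B)) :
    (∀ x : T, IsIntegral R x → x ∈ R) ∧
    (∀ x ∈ nilradical T, x ∈ R) ∧
    (∀ x : R, x ∈ nilradical R ↔ (x : T) ∈ nilradical T) :=
  integrally_closed_of_no_integrally_dependent_adjacent_general T R h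
end

section
/- Let R ⊊ T be Noetherian integral domains such that there do not exist integrally dependent adjacent Noetherian rings between them, i.e., there are no rings A, B with R ⊆ A ⊊ B ⊆ T such that A and B are Noetherian, B is integral over A, and no ring lies strictly between A and B. Then the following are equivalent: (i) for all nonzero b, c ∈ R, if c/b ∈ T (i.e., there exists t ∈ T with b·t = c), then c/b ∈ R (there exists r ∈ R with b·r = c) or b/c ∈ R (there exists r ∈ R with c·r = b); (ii) both R and T are local rings. -/
/-!
Adjacency gives integral closedness: if `u ∉ A` is integral over a Noetherian ring `A ⊇ R`,
then a maximal proper `A`-subalgebra `C` of the finite `A`-algebra `A[u]` (which exists since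
`A[u]` is a Noetherian `A`-module) makes `C ⊊ A[u]` an integrally dependent adjacent Noetherian
pair. Applied to `A = R[x²]`, this shows that every `x ∈ T` is a root of a polynomial over `R`
with unit linear coefficient; applied to `A = R`, that `x` times the leading coefficient of such
a polynomial lies in `R`, so every `x ∈ T` is a fraction of elements of `R`.

Hence condition (i) says that every `t ∈ T` lies in `R` or has an inverse in `R`. When `R` is
local this dichotomy follows by induction on the degree of a polynomial with a unit coefficient
vanishing at `t`. Conversely, the dichotomy puts every nonunit of `T` into `R`, so `T` is local
as soon as `R` is; and `R` is local because, writing `s = τ⁻¹` for some `τ ∈ T \ R`, Krull's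
intersection theorem forces every nonunit of `R` into the radical of `sR`.
-/

open Polynomial

instance Subalgebra.wellFoundedGT_of_isNoetherian {R M : Type*} [CommSemiring R] [Semiring M]
    [Algebra R M] [IsNoetherian R M] : WellFoundedGT (Subalgebra R M) :=
  RelHomClass.isWellFounded (⟨Subalgebra.toSubmodule, fun h ↦ h⟩ : _ →r (· > ·))

section

variable {T : Type*} [CommRing T]

section

variable {A : Subring T}

theorem IsIntegral.of_subring_le {B : Subring T} (hAB : A ≤ B) {x : T} (hx : IsIntegral A x) :
    IsIntegral B x := by
  let := (Subring.inclusion hAB).toAlgebra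
  have : IsScalarTower A B T := .of_algebraMap_eq fun _ ↦ rfl
  exact hx.tower_top

/-- Its range is the interval of subrings of `T` between `A` and `S`. -/
def Subalgebra.subalgebraToSubring (S : Subalgebra A T) : Subalgebra A S ↪o Subring T :=
  OrderEmbedding.ofMapLEIff (fun D ↦ (D.map S.val).toSubring) fun _ _ ↦
    Set.image_subset_image_iff Subtype.val_injective

theorem Subalgebra.mem_subalgebraToSubring {S : Subalgebra A T} {D : Subalgebra A S} {x : T} :
    x ∈ S.subalgebraToSubring D ↔ ∃ y ∈ D, (y : T) = x :=
  Subalgebra.mem_map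

theorem Subalgebra.ordConnected_range_subalgebraToSubring (S : Subalgebra A T) :
    (Set.range S.subalgebraToSubring).OrdConnected := by
  refine ⟨?_⟩
  rintro _ ⟨D₁, rfl⟩ _ ⟨D₂, rfl⟩ X ⟨hX₁, hX₂⟩
  refine ⟨{ X.comap S.val.toRingHom with
    algebraMap_mem' := fun a ↦ hX₁ ⟨_, D₁.algebraMap_mem a, rfl⟩ }, ?_⟩
  ext x
  refine ⟨fun ⟨y, hy, hyx⟩ ↦ hyx ▸ hy, fun hx ↦ ?_⟩
  obtain ⟨y, -, rfl⟩ := hX₂ hx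
  exact ⟨y, hx, rfl⟩

theorem Subalgebra.isNoetherianRing_subalgebraToSubring [IsNoetherianRing A] (S : Subalgebra A T)
    [Module.Finite A S] (D : Subalgebra A S) : IsNoetherianRing (S.subalgebraToSubring D) := by
  have : IsNoetherian A D := isNoetherian_submodule' (Subalgebra.toSubmodule D)
  have : IsNoetherianRing D := isNoetherian_of_tower A inferInstance
  exact isNoetherianRing_of_ringEquiv D
    (Subalgebra.equivMapOfInjective D S.val Subtype.val_injective).toRingEquiv

theorem exists_covBy_of_isIntegral_of_notMem [IsNoetherianRing A] {u : T} (hu : IsIntegral A u)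
    (huA : u ∉ A) : ∃ C B : Subring T, A ≤ C ∧ C ⋖ B ∧ IsNoetherianRing C ∧ IsNoetherianRing B ∧
      ∀ x ∈ B, IsIntegral C x := by
  set S := Algebra.adjoin A {u}
  have : Module.Finite A S := Algebra.finite_adjoin_simple_of_isIntegral hu
  have hbot : (⊥ : Subalgebra A S) < ⊤ := by
    refine lt_top_iff_ne_top.2 fun h ↦ huA ?_
    obtain ⟨a, ha⟩ : (⟨u, Algebra.self_mem_adjoin_singleton A u⟩ : S) ∈ (⊥ : Subalgebra A S) :=
      h ▸ Algebra.mem_top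
    exact (congrArg Subtype.val ha).subst (motive := (· ∈ A)) a.2
  obtain ⟨C, -, hC⟩ := exists_le_covBy_of_lt hbot
  have hAC : A ≤ S.subalgebraToSubring C := fun a ha ↦
    Subalgebra.mem_subalgebraToSubring.2 ⟨_, C.algebraMap_mem ⟨a, ha⟩, rfl⟩
  refine ⟨_, _, hAC, hC.image _ S.ordConnected_range_subalgebraToSubring,
    S.isNoetherianRing_subalgebraToSubring C, S.isNoetherianRing_subalgebraToSubring ⊤, ?_⟩
  rintro _ ⟨x, -, rfl⟩
  exact ((IsIntegral.of_finite A x).map S.val).of_subring_le hAC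

end

theorem exists_aeval_eq_zero_isUnit_coeff_one (R : Subring T) [IsNoetherianRing R]
    (hR : ∀ A : Subring T, R ≤ A → IsNoetherianRing A → ∀ u : T, IsIntegral A u → u ∈ A)
    (x : T) : ∃ f : R[X], aeval x f = 0 ∧ IsUnit (f.coeff 1) := by
  set A := Algebra.adjoin R {x ^ 2}
  have : IsNoetherianRing A := isNoetherianRing_of_fg ⟨{x ^ 2}, by classical simp [A]⟩
  have hx2 : x ^ 2 ∈ A := Algebra.self_mem_adjoin_singleton R _
  have hx : x ∈ A := hR A.toSubring (fun r hr ↦ A.algebraMap_mem (⟨r, hr⟩ : R)) this x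
    ⟨X ^ 2 - C ⟨x ^ 2, hx2⟩, monic_X_pow_sub_C _ two_ne_zero, by
      simp only [eval₂_sub, eval₂_X_pow, eval₂_C]
      exact sub_self _⟩
  obtain ⟨p, hp⟩ : x ∈ (aeval (x ^ 2) : R[X] →ₐ[R] T).range :=
    Algebra.adjoin_singleton_eq_range_aeval R (x ^ 2) ▸ hx
  refine ⟨expand R 2 p - X, by simpa using sub_eq_zero.2 hp, ?_⟩
  simp [coeff_expand two_pos]

theorem exists_ne_zero_mul_eq_of_aeval_eq_zero (R : Subring T)
    (hR : ∀ u : T, IsIntegral R u → u ∈ R) {t : T} {f : R[X]} (hf : aeval t f = 0)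
    (hf0 : f ≠ 0) : ∃ b : R, b ≠ 0 ∧ ∃ c : R, (b : T) * t = c :=
  ⟨f.leadingCoeff, leadingCoeff_ne_zero.2 hf0,
    ⟨_, hR _ (isIntegral_leadingCoeff_smul f t hf)⟩, rfl⟩

theorem mem_or_exists_mul_eq_one_of_isUnit_coeff (R : Subring T) [IsLocalRing R]
    (hR : ∀ u : T, IsIntegral R u → u ∈ R) {t : T} {f : R[X]} (hf : aeval t f = 0) {j : ℕ}
    (hj : IsUnit (f.coeff j)) : t ∈ R ∨ ∃ r : R, t * r = 1 := by
  induction hd : f.natDegree using Nat.strong_induction_on generalizing f j with | h d IH =>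
  set y : R := ⟨f.leadingCoeff • t, hR _ (isIntegral_leadingCoeff_smul f t hf)⟩
  have hy : (y : T) = f.leadingCoeff * t := rfl
  obtain hjd | rfl | hjd := lt_trichotomy j d
  · obtain ⟨m, rfl⟩ : ∃ m, d = m + 1 := Nat.exists_eq_add_one.2 (j.zero_le.trans_lt hjd)
    -- trade the leading term `a tᵐ⁺¹` of `f(t)` for `y tᵐ`, where `a = f.leadingCoeff`, `y = a t ∈ R`
    set g := f.eraseLead + C y * X ^ m
    have hg : aeval t g = 0 := by
      have hf' := congrArg (aeval t) (eraseLead_add_monomial_natDegree_leadingCoeff f)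
      simp only [map_add, hf, hd, aeval_monomial] at hf'
      change _ + (f.leadingCoeff : T) * _ = 0 at hf'
      simp only [g, map_add, map_mul, aeval_C, map_pow, aeval_X]
      change _ + (y : T) * _ = 0
      linear_combination hf' + t ^ m * hy
    have hgd : g.natDegree < m + 1 := by
      refine Nat.lt_succ_of_le (natDegree_add_le_of_degree_le ?_ (natDegree_C_mul_X_pow_le y m))
      exact (eraseLead_natDegree_le f).trans (by omega)
    have hgj : g.coeff j = f.coeff j + if j = m then y else 0 := by
      simp [g, eraseLead_coeff, coeff_C_mul, coeff_X_pow, hd, hjd.ne]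
    by_cases hjm : j = m
    · rw [if_pos hjm] at hgj
      rcases IsLocalRing.isUnit_or_isUnit_of_isUnit_add (a := g.coeff j) (b := -y)
        (by rwa [hgj, add_neg_cancel_right]) with hu | hu
      · exact IH _ hgd hg hu rfl
      · have hu : IsUnit y := by simpa using hu.neg
        refine Or.inr ⟨f.leadingCoeff * ↑hu.unit⁻¹, ?_⟩
        rw [Subring.coe_mul, ← mul_assoc, mul_comm t, ← hy, ← Subring.coe_mul, hu.mul_val_inv,
          Subring.coe_one]
    · rw [if_neg hjm, add_zero] at hgj
      exact IH _ hgd hg (hgj ▸ hj) rfl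
  · rw [← hd, coeff_natDegree] at hj
    refine Or.inl ((?_ : ((↑hj.unit⁻¹ * y : R) : T) = t) ▸ SetLike.coe_mem _)
    rw [Subring.coe_mul, hy, ← mul_assoc, ← Subring.coe_mul, hj.val_inv_mul, Subring.coe_one,
      one_mul]
  · rw [coeff_eq_zero_of_natDegree_lt (hd ▸ hjd)] at hj
    exact absurd hj not_isUnit_zero

def Subring.MemOrInvMem (R : Subring T) : Prop :=
  ∀ t : T, t ∈ R ∨ ∃ r : R, t * r = 1

theorem comparability_iff_memOrInvMem [IsDomain T] (R : Subring T)
    (hfrac : ∀ t : T, ∃ b : R, b ≠ 0 ∧ ∃ c : R, (b : T) * t = c) :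
    (∀ b c : R, b ≠ 0 → c ≠ 0 → (∃ t : T, (b : T) * t = c) →
      (∃ r : R, b * r = c) ∨ (∃ r : R, c * r = b)) ↔ R.MemOrInvMem := by
  refine ⟨fun hcomp t ↦ ?_, fun hdich b c _ _ ⟨t, ht⟩ ↦ ?_⟩
  · obtain ⟨b, hb, c, hbc⟩ := hfrac t
    have hbT : (b : T) ≠ 0 := by exact_mod_cast hb
    by_cases hc : c = 0
    · left
      rw [hc, ZeroMemClass.coe_zero, mul_eq_zero, or_iff_right hbT] at hbc
      exact hbc ▸ R.zero_mem
    rcases hcomp b c hb hc ⟨t, hbc⟩ with ⟨r, hr⟩ | ⟨r, hr⟩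
    · left
      have : t = r := mul_left_cancel₀ hbT (hbc.trans (congrArg Subtype.val hr).symm)
      exact this ▸ r.2
    · right
      refine ⟨r, mul_left_cancel₀ hbT ?_⟩
      rw [← mul_assoc, hbc, mul_one]
      exact congrArg Subtype.val hr
  · rcases hdich t with htR | ⟨r, hr⟩
    · exact Or.inl ⟨⟨t, htR⟩, Subtype.ext ht⟩
    · refine Or.inr ⟨r, Subtype.ext ?_⟩
      change (c : T) * r = b
      rw [← ht, mul_assoc, hr, mul_one]

theorem IsLocalRing.of_forall_mem_radical_span_singleton {R : Type*} [CommRing R] [Nontrivial R]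
    {s : R} (hs : ¬ IsUnit s) (h : ∀ z : R, ¬ IsUnit z → z ∈ (Ideal.span {s}).radical) :
    IsLocalRing R := by
  refine of_isUnit_or_isUnit_one_sub_self fun a ↦ or_iff_not_imp_left.2 fun ha ↦ ?_
  by_contra ha'
  have h1 : (1 : R) ∈ (Ideal.span {s}).radical := by
    simpa using add_mem (h a ha) (h _ ha')
  exact hs (Ideal.span_singleton_eq_top.1 (Ideal.radical_eq_top.1 ((Ideal.eq_top_iff_one _).2 h1)))

theorem Subring.MemOrInvMem.isLocalRing [IsDomain T] {R : Subring T} [IsNoetherianRing R]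
    (hR : R.MemOrInvMem) (hRT : R ≠ ⊤) : IsLocalRing R := by
  obtain ⟨τ, hτ⟩ : ∃ τ, τ ∉ R := by
    by_contra! hall
    exact hRT (eq_top_iff.2 fun x _ ↦ hall x)
  obtain ⟨s, hs⟩ := (hR τ).resolve_left hτ
  have hs0 : s ≠ 0 := by
    rintro rfl
    simp at hs
  have hsu : ¬ IsUnit s := fun hu ↦ hτ <| by
    have : τ = (↑hu.unit⁻¹ : R) := by
      rw [← mul_one τ, ← Subring.coe_one, ← hu.mul_val_inv, Subring.coe_mul, ← mul_assoc, hs,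
        one_mul]
    exact this ▸ SetLike.coe_mem _
  refine IsLocalRing.of_forall_mem_radical_span_singleton hsu fun z hz ↦ ?_
  by_contra hzs
  -- `zⁿ τ ∉ R` since `s ∤ zⁿ`, so `zⁿ τ` has an inverse in `R`, i.e. `zⁿ ∣ s`
  have hpow : ∀ n, s ∈ Ideal.span {z} ^ n := fun n ↦ by
    rw [Ideal.span_singleton_pow, Ideal.mem_span_singleton']
    rcases hR ((z : T) ^ n * τ) with hmem | ⟨r, hr⟩
    · refine absurd ⟨n, Ideal.mem_span_singleton'.2 ⟨⟨_, hmem⟩, Subtype.ext ?_⟩⟩ hzs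
      change (z : T) ^ n * τ * s = (z : T) ^ n
      rw [mul_assoc, hs, mul_one]
    · refine ⟨r, Subtype.ext ?_⟩
      change (r : T) * (z : T) ^ n = s
      linear_combination (s : T) * hr - (z : T) ^ n * r * hs
  have hbot : s ∈ ⨅ n, Ideal.span {z} ^ n := Ideal.mem_iInf.2 hpow
  rw [Ideal.iInf_pow_eq_bot_of_isDomain (I := Ideal.span {z})
    (by rwa [Ne, Ideal.span_singleton_eq_top])] at hbot
  exact hs0 (Ideal.mem_bot.1 hbot)

theorem IsLocalRing.of_memOrInvMem [Nontrivial T] {R : Subring T} [IsLocalRing R]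
    (hR : R.MemOrInvMem) : IsLocalRing T := by
  refine of_isUnit_or_isUnit_one_sub_self fun a ↦ or_iff_not_imp_left.2 fun ha ↦ ?_
  rcases hR a with haR | ⟨r, hr⟩
  · have hu : ¬ IsUnit (⟨a, haR⟩ : R) := fun hu ↦ ha (hu.map R.subtype)
    simpa using ((isUnit_or_isUnit_one_sub_self _).resolve_left hu).map R.subtype
  · exact absurd (IsUnit.of_mul_eq_one _ hr) ha

end

theorem comparability_iff_local_general
    (T : Type*) [CommRing T] [IsDomain T]
    (R : Subring T) [IsNoetherianRing R] (hRT : R ≠ ⊤)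
    (h : ¬ ∃ A B : Subring T, R ≤ A ∧ A < B ∧ IsNoetherianRing A ∧ IsNoetherianRing B ∧
      (∀ x ∈ B, IsIntegral A x) ∧
      (∀ S : Subring T, A ≤ S → S ≤ B → S = A ∨ S = B)) :
    ((∀ b c : R, b ≠ 0 → c ≠ 0 → (∃ t : T, (b : T) * t = (c : T)) →
        (∃ r : R, b * r = c) ∨ (∃ r : R, c * r = b)) ↔
      (IsLocalRing R ∧ IsLocalRing T)) := by
  have hclosed : ∀ A : Subring T, R ≤ A → IsNoetherianRing A → ∀ u, IsIntegral A u → u ∈ A := by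
    intro A hRA _ u hu
    by_contra huA
    obtain ⟨C, B, hAC, hCB, hC, hB, hint⟩ := exists_covBy_of_isIntegral_of_notMem hu huA
    exact h ⟨C, B, hRA.trans hAC, hCB.lt, hC, hB, hint, (covBy_iff_lt_and_eq_or_eq.1 hCB).2⟩
  have hRclosed := hclosed R le_rfl ‹_›
  have hroot := exists_aeval_eq_zero_isUnit_coeff_one R hclosed
  rw [comparability_iff_memOrInvMem R fun t ↦ ?_]
  · refine ⟨fun hR ↦ ?_, fun ⟨_, _⟩ t ↦ ?_⟩
    · have := hR.isLocalRing hRT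
      exact ⟨this, IsLocalRing.of_memOrInvMem hR⟩
    · obtain ⟨f, hf, hu⟩ := hroot t
      exact mem_or_exists_mul_eq_one_of_isUnit_coeff R hRclosed hf hu
  · obtain ⟨f, hf, hu⟩ := hroot t
    exact exists_ne_zero_mul_eq_of_aeval_eq_zero R hRclosed hf (by rintro rfl; simp at hu)

/-- Let R ⊊ T be Noetherian domains with no integrally dependent adjacent Noetherian
rings between them. Then the divisibility comparability condition (i) holds for all
nonzero b, c ∈ R iff both R and T are local rings. -/
theorem comparability_iff_local
    (T : Type*) [CommRing T] [IsDomain T] [IsNoetherianRing T]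
    (R : Subring T) [IsNoetherianRing R] (hRT : R ≠ ⊤)
    (h : ¬ ∃ A B : Subring T, R ≤ A ∧ A < B ∧ IsNoetherianRing A ∧ IsNoetherianRing B ∧
      (∀ x ∈ B, IsIntegral A x) ∧
      (∀ S : Subring T, A ≤ S → S ≤ B → S = A ∨ S = B)) :
    ((∀ b c : R, b ≠ 0 → c ≠ 0 → (∃ t : T, (b : T) * t = (c : T)) →
        (∃ r : R, b * r = c) ∨ (∃ r : R, c * r = b)) ↔
      (IsLocalRing R ∧ IsLocalRing T)) :=
  comparability_iff_local_general T R hRT h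
end

section
/- Let R ⊆ T be Noetherian integral domains such that (R,T) is a normal pair, i.e., every ring S with R ⊆ S ⊆ T is integrally closed in T. Assume moreover that R is a local ring. Then for all nonzero b, c ∈ R with c/b ∈ T (i.e., there exists t ∈ T with b·t = c), either c/b ∈ R (there exists r ∈ R with b·r = c) or b/c ∈ R (there exists r ∈ R with c·r = b). -/
/-! For `t ∈ T`, `t` is integral over `R[t²]`, so normality puts `t` in `R[t²]`: `t` is a root of a
polynomial over `R` with linear coefficient `-1`. As `R` is integrally closed in `T`, the leading
coefficient times `t` lies in `R`, which lets one lower the degree until `r t - t + c = 0` with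
`r = a t ∈ R`. Since `R` is local, `r` or `1 - r` is a unit: in the first case `a r⁻¹` inverts `t`,
in the second `t = c (1 - r)⁻¹ ∈ R`. For `t = c/b` these are the two alternatives. -/

open Polynomial

namespace Subring

variable {T : Type*} [CommRing T] (R : Subring T)

theorem coeff_mul_mem_of_aeval_eq_zero (hR : ∀ x : T, IsIntegral R x → x ∈ R) {t : T}
    {q : R[X]} (hq : aeval t q = 0) {k : ℕ} (hk : q.natDegree ≤ k) :
    (q.coeff k : T) * t ∈ R := by
  rcases hk.eq_or_lt with rfl | hlt
  · exact hR _ (isIntegral_leadingCoeff_smul q t hq)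
  · simp [coeff_eq_zero_of_natDegree_lt hlt]

theorem exists_natDegree_le_aeval_eq_zero (hR : ∀ x : T, IsIntegral R x → x ∈ R) {t : T}
    {q : R[X]} {n : ℕ} (hn : q.natDegree ≤ n + 1) (hq : aeval t q = 0) :
    ∃ q' : R[X], q'.natDegree ≤ n ∧ aeval t q' = 0 ∧ ∀ i < n, q'.coeff i = q.coeff i := by
  set a := q.coeff (n + 1)
  let r : R := ⟨a * t, R.coeff_mul_mem_of_aeval_eq_zero hR hq hn⟩
  -- `C r - C a * X` vanishes at `t`, and its multiple by `X ^ n` cancels the top coefficient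
  refine ⟨q + (C r - C a * X) * X ^ n, ?_, ?_, fun i hi => ?_⟩
  · rw [natDegree_le_iff_coeff_eq_zero]
    intro i hi
    rw [coeff_add, coeff_mul_X_pow', if_pos (le_of_lt hi)]
    rcases (Nat.succ_le_of_lt hi).eq_or_lt with rfl | hlt
    · simp [a]
    · rw [coeff_eq_zero_of_natDegree_lt (hn.trans_lt hlt)]
      simp [coeff_C, coeff_X, show i - n ≠ 0 by omega, show 1 ≠ i - n by omega]
  · simp [hq, r, Algebra.algebraMap_ofSubsemiring_apply]
  · simp [coeff_mul_X_pow', Nat.not_le_of_lt hi]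

theorem exists_quadratic_relation (hR : ∀ x : T, IsIntegral R x → x ∈ R) {t : T}
    {q : R[X]} (hq1 : q.coeff 1 = -1) (hq : aeval t q = 0) :
    ∃ a r c : R, (a : T) * t = r ∧ (r : T) * t - t + c = 0 := by
  obtain ⟨d, hd⟩ : ∃ d, q.natDegree ≤ d + 2 := ⟨q.natDegree, by omega⟩
  induction d generalizing q with
  | zero =>
    refine ⟨q.coeff 2, ⟨_, R.coeff_mul_mem_of_aeval_eq_zero hR hq hd⟩, q.coeff 0, rfl, ?_⟩
    rw [aeval_eq_sum_range' (Nat.lt_succ_of_le hd)] at hq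
    simp only [Finset.sum_range_succ, Finset.sum_range_zero, hq1, Algebra.smul_def,
      Algebra.algebraMap_ofSubsemiring_apply] at hq
    push_cast at hq ⊢
    linear_combination hq
  | succ d ih =>
    obtain ⟨q', hdeg, hq', hcoeff⟩ := R.exists_natDegree_le_aeval_eq_zero hR hd hq
    exact ih ((hcoeff 1 (by omega)).trans hq1) hq' hdeg

theorem mem_or_exists_mul_eq_one_of_quadratic [IsLocalRing R] {t : T} {a r c : R}
    (hr : (a : T) * t = r) (h : (r : T) * t - t + c = 0) : t ∈ R ∨ ∃ s : R, t * s = 1 := by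
  rcases IsLocalRing.isUnit_or_isUnit_one_sub_self r with ⟨u, hu⟩ | ⟨u, hu⟩
  · refine .inr ⟨a * ↑u⁻¹, ?_⟩
    have hinv : ((r * ↑u⁻¹ : R) : T) = 1 := by simp [← hu]
    push_cast at hinv ⊢
    linear_combination ↑↑u⁻¹ * hr + hinv
  · have hinv : (((1 - r) * ↑u⁻¹ : R) : T) = 1 := by simp [← hu]
    refine .inl ?_
    convert (c * ↑u⁻¹ : R).2 using 1
    push_cast at hinv ⊢
    linear_combination (-t) * hinv - ↑↑u⁻¹ * h

def IsNormalPair : Prop := ∀ S : Subring T, R ≤ S → ∀ x : T, IsIntegral S x → x ∈ S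

variable {R}

theorem IsNormalPair.mem_adjoin_sq (hR : R.IsNormalPair) (t : T) :
    t ∈ Algebra.adjoin R {t ^ 2} := by
  set A := (Algebra.adjoin R {t ^ 2}).toSubring
  have ht2 : t ^ 2 ∈ A := Algebra.subset_adjoin rfl
  refine hR A (fun r hr => (Algebra.adjoin R {t ^ 2}).algebraMap_mem ⟨r, hr⟩) t ?_
  exact (isIntegral_algebraMap (x := (⟨t ^ 2, ht2⟩ : A))).of_pow two_pos

theorem IsNormalPair.mem_or_exists_mul_eq_one [IsLocalRing R] (hR : R.IsNormalPair) (t : T) :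
    t ∈ R ∨ ∃ s : R, t * s = 1 := by
  obtain ⟨p, hp⟩ : ∃ p : R[X], aeval (t ^ 2) p = t := by
    simpa [Algebra.adjoin_singleton_eq_range_aeval] using hR.mem_adjoin_sq t
  have hq1 : (expand R 2 p - X).coeff 1 = -1 := by simp [coeff_expand two_pos]
  have hq : aeval t (expand R 2 p - X) = 0 := by simp [expand_aeval, hp]
  obtain ⟨a, r, c, hr, h⟩ := R.exists_quadratic_relation (hR R le_rfl) hq1 hq
  exact R.mem_or_exists_mul_eq_one_of_quadratic hr h

end Subring

theorem comparability_of_normal_pair_local_general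
    (T : Type*) [CommRing T]
    (R : Subring T) [IsLocalRing R]
    (hnormal : ∀ S : Subring T, R ≤ S → ∀ x : T, IsIntegral S x → x ∈ S) :
    ∀ b c : R, b ≠ 0 → c ≠ 0 → (∃ t : T, (b : T) * t = (c : T)) →
      (∃ r : R, b * r = c) ∨ (∃ r : R, c * r = b) := by
  rintro b c - - ⟨t, hbt⟩
  rcases Subring.IsNormalPair.mem_or_exists_mul_eq_one hnormal t with ht | ⟨s, hts⟩
  · exact .inl ⟨⟨t, ht⟩, Subtype.ext hbt⟩
  · refine .inr ⟨s, Subtype.ext ?_⟩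
    calc (c : T) * s = b * (t * s) := by rw [← hbt, mul_assoc]
      _ = b := by rw [hts, mul_one]

/-- Let R ⊆ T be Noetherian domains forming a normal pair, with R local. Then for all
nonzero b, c ∈ R with c/b ∈ T, either c/b ∈ R or b/c ∈ R. -/
theorem comparability_of_normal_pair_local
    (T : Type*) [CommRing T] [IsDomain T] [IsNoetherianRing T]
    (R : Subring T) [IsNoetherianRing R] [IsLocalRing R]
    (hnormal : ∀ S : Subring T, R ≤ S → ∀ x : T, IsIntegral S x → x ∈ S) :
    ∀ b c : R, b ≠ 0 → c ≠ 0 → (∃ t : T, (b : T) * t = (c : T)) →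
      (∃ r : R, b * r = c) ∨ (∃ r : R, c * r = b) :=
  comparability_of_normal_pair_local_general T R hnormal
end

section
/- Let R ⊆ T be Noetherian integral domains such that (R,T) is a normal pair, i.e., every ring S with R ⊆ S ⊆ T is integrally closed in T. Then T is an overring of R: every element t ∈ T can be written as a fraction of elements of R, i.e., there exist b, c ∈ R with b ≠ 0 and b·t = c. -/
/-!
Since `t` is a root of `X ^ 2 - t ^ 2`, it is integral over `R[t ^ 2]`, so normality puts `t`
in `R[t ^ 2]`: `t = f (t ^ 2)` for a polynomial `f` over `R`. Then `t` is a root of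
`f (X ^ 2) - X`, which is nonzero because its linear coefficient is `-1`. Hence `t` is algebraic
over `R`, some nonzero `b ∈ R` makes `b * t` integral over `R`, and since `R` is integrally closed
in `T`, `b * t ∈ R`.
-/

open Polynomial

theorem isAlgebraic_of_mem_adjoin_pow {R A : Type*} [CommRing R] [Nontrivial R] [CommRing A]
    [Algebra R A] {x : A} {n : ℕ} (hn : 1 < n) (hx : x ∈ Algebra.adjoin R {x ^ n}) :
    IsAlgebraic R x := by
  rw [Algebra.adjoin_singleton_eq_range_aeval] at hx
  obtain ⟨f, hf⟩ := hx
  have hcoeff : (expand R n f - X).coeff 1 = -1 := by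
    rw [coeff_sub, coeff_expand (by omega), coeff_X_one,
      if_neg (Nat.not_dvd_of_pos_of_lt one_pos hn), zero_sub]
  refine ⟨expand R n f - X, fun h => by simp [h] at hcoeff, ?_⟩
  rw [map_sub, expand_aeval, aeval_X]
  exact sub_eq_zero.mpr hf

theorem overring_of_normal_pair_general
    (T : Type*) [CommRing T] [IsDomain T]
    (R : Subring T)
    (hnormal : ∀ S : Subring T, R ≤ S → ∀ x : T, IsIntegral S x → x ∈ S) :
    ∀ t : T, ∃ b c : R, b ≠ 0 ∧ (b : T) * t = (c : T) := by
  intro t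
  set S := Algebra.adjoin R {t ^ 2}
  have hRS : R ≤ S.toSubring := fun r hr => S.algebraMap_mem ⟨r, hr⟩
  have hsq : IsIntegral S.toSubring (t ^ 2) :=
    isIntegral_algebraMap (x := (⟨t ^ 2, Algebra.subset_adjoin rfl⟩ : S.toSubring))
  have htS : t ∈ S := hnormal S.toSubring hRS t (hsq.of_pow two_pos)
  obtain ⟨b, hb, hint⟩ :=
    (isAlgebraic_of_mem_adjoin_pow one_lt_two htS).exists_integral_multiple
  exact ⟨b, ⟨_, hnormal R le_rfl _ hint⟩, hb, (Algebra.smul_def b t).symm⟩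

/-- Let R ⊆ T be Noetherian domains forming a normal pair. Then T is an overring of R:
every t ∈ T satisfies b * t = c for some b, c ∈ R with b ≠ 0. -/
theorem overring_of_normal_pair
    (T : Type*) [CommRing T] [IsDomain T] [IsNoetherianRing T]
    (R : Subring T) [IsNoetherianRing R]
    (hnormal : ∀ S : Subring T, R ≤ S → ∀ x : T, IsIntegral S x → x ∈ S) :
    ∀ t : T, ∃ b c : R, b ≠ 0 ∧ (b : T) * t = (c : T) :=
  overring_of_normal_pair_general T R hnormal
end
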